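/- The subgroup ⟨A, M, S⟩ of Sym(Ω) decomposes as a semidirect product of A by ⟨M,S⟩: A is normal in ⟨A, M, S⟩, A ∩ ⟨M,S⟩ = 1 and ⟨A, M, S⟩ = A·⟨M,S⟩. Moreover A = F × V internally (i.e. A = FV, F ∩ V = 1 and [F,V] = 1), the centralizer of V in ⟨M,S⟩ is trivial, [M,F] = 1, and the centralizer of F in ⟨M,S⟩ equals ⟨M, β_{1,−1}⟩. -/

import Mathlib

open Equiv

/-! Context: `q = 3^r`, `K = F_q` a finite field with `3^r` elements, `Ω = K × K × K`,
`ε = 3^(r-1)` (so `q = 3ε`).  Permutations of `Ω` are composed left to right in the paper;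
in Lean, `(g * h) x = g (h x)`, so the paper's product `g·h` corresponds to `h * g` here,
and the paper's conjugate `g⁻¹ x g` corresponds to `g * x * g⁻¹`. -/

/-- The permutation `α_{(u,v,w)} : (a,b,c) ↦ (a+u, b+v, c+w)` of `Ω = K × K × K`. -/
def alphaPerm {K : Type*} [Field K] (u v w : K) : Equiv.Perm (K × K × K) where
  toFun x := (x.1 + u, x.2.1 + v, x.2.2 + w)
  invFun x := (x.1 - u, x.2.1 - v, x.2.2 - w)
  left_inv x := by simp
  right_inv x := by simp

/-- The permutation `β_{λ,μ} : (a,b,c) ↦ (λa, μb, (λμ)^{2ε} c)` of `Ω = K × K × K`. -/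
def betaPerm {K : Type*} [Field K] (ε : ℕ) (l m : Kˣ) : Equiv.Perm (K × K × K) where
  toFun x := ((l : K) * x.1, (m : K) * x.2.1, (((l * m) ^ (2 * ε) : Kˣ) : K) * x.2.2)
  invFun x := ((l⁻¹ : Kˣ) * x.1, (m⁻¹ : Kˣ) * x.2.1, ((((l * m) ^ (2 * ε))⁻¹ : Kˣ) : K) * x.2.2)
  left_inv x := by simp
  right_inv x := by simp

/-- The permutation `γ_e : (a,b,c) ↦ (a+eb, b, c)` of `Ω = K × K × K`. -/
def gammaPerm {K : Type*} [Field K] (e : K) : Equiv.Perm (K × K × K) where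
  toFun x := (x.1 + e * x.2.1, x.2.1, x.2.2)
  invFun x := (x.1 - e * x.2.1, x.2.1, x.2.2)
  left_inv x := by simp
  right_inv x := by simp

/-- The permutation `δ : (a,b,c) ↦ (b, -a, c)` of `Ω = K × K × K`. -/
def deltaPerm (K : Type*) [Field K] : Equiv.Perm (K × K × K) where
  toFun x := (x.2.1, -x.1, x.2.2)
  invFun x := (-x.2.1, x.1, x.2.2)
  left_inv x := by simp
  right_inv x := by simp

/-- The permutation `τ_d : (a,b,c) ↦ (a + d·b² + d^ε·c, b, c)` of `Ω = K × K × K`. -/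
def tauPerm {K : Type*} [Field K] (ε : ℕ) (d : K) : Equiv.Perm (K × K × K) where
  toFun x := (x.1 + d * x.2.1 ^ 2 + d ^ ε * x.2.2, x.2.1, x.2.2)
  invFun x := (x.1 - d * x.2.1 ^ 2 - d ^ ε * x.2.2, x.2.1, x.2.2)
  left_inv x := by obtain ⟨a, b, c⟩ := x; simp; ring
  right_inv x := by obtain ⟨a, b, c⟩ := x; simp; ring

variable (K : Type*) [Field K]

/-- `A = ⟨α_{(u,v,w)} : u,v,w ∈ F_q⟩`. -/
def Agrp : Subgroup (Equiv.Perm (K × K × K)) :=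
  Subgroup.closure {g | ∃ u v w : K, g = alphaPerm u v w}

/-- `V = ⟨α_{(u,v,0)} : u,v ∈ F_q⟩`. -/
def Vgrp : Subgroup (Equiv.Perm (K × K × K)) :=
  Subgroup.closure {g | ∃ u v : K, g = alphaPerm u v 0}

/-- `F = ⟨α_{(0,0,w)} : w ∈ F_q⟩`. -/
def Fgrp : Subgroup (Equiv.Perm (K × K × K)) :=
  Subgroup.closure {g | ∃ w : K, g = alphaPerm 0 0 w}

/-- `Z₀ = ⟨α_{(u,0,w)} : u,w ∈ F_q⟩`. -/
def Z0grp : Subgroup (Equiv.Perm (K × K × K)) :=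
  Subgroup.closure {g | ∃ u w : K, g = alphaPerm u 0 w}

/-- `Z = ⟨α_{(u,0,0)} : u ∈ F_q⟩`. -/
def Zgrp : Subgroup (Equiv.Perm (K × K × K)) :=
  Subgroup.closure {g | ∃ u : K, g = alphaPerm u 0 0}

/-- `C = ⟨γ_e : e ∈ F_q⟩`. -/
def Cgrp : Subgroup (Equiv.Perm (K × K × K)) :=
  Subgroup.closure {g | ∃ e : K, g = gammaPerm e}

/-- `R = ⟨β_{μ,μ} : μ ∈ F_q^×⟩`. -/
def Rgrp (ε : ℕ) : Subgroup (Equiv.Perm (K × K × K)) :=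
  Subgroup.closure {g | ∃ μ : Kˣ, g = betaPerm ε μ μ}

/-- `S = ⟨β_{μ²,μ} : μ ∈ F_q^×⟩`. -/
def Sgrp (ε : ℕ) : Subgroup (Equiv.Perm (K × K × K)) :=
  Subgroup.closure {g | ∃ μ : Kˣ, g = betaPerm ε (μ ^ 2) μ}

/-- `T = ⟨β_{μ,μ⁻¹} : μ ∈ F_q^×⟩`. -/
def Tgrp (ε : ℕ) : Subgroup (Equiv.Perm (K × K × K)) :=
  Subgroup.closure {g | ∃ μ : Kˣ, g = betaPerm ε μ μ⁻¹}

/-- `D = ⟨δ⟩`. -/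
def Dgrp : Subgroup (Equiv.Perm (K × K × K)) :=
  Subgroup.closure {deltaPerm K}

/-- `E = ⟨τ_d : d ∈ F_q⟩`. -/
def Egrp (ε : ℕ) : Subgroup (Equiv.Perm (K × K × K)) :=
  Subgroup.closure {g | ∃ d : K, g = tauPerm ε d}

/-- `M = ⟨C, D, T⟩`. -/
def Mgrp (ε : ℕ) : Subgroup (Equiv.Perm (K × K × K)) :=
  Cgrp K ⊔ Dgrp K ⊔ Tgrp K ε

/-- `Q = ⟨A, C⟩`. -/
def QgrpBig : Subgroup (Equiv.Perm (K × K × K)) :=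
  Agrp K ⊔ Cgrp K

/-- `P = ⟨Q, E⟩`. -/
def Pgrp (ε : ℕ) : Subgroup (Equiv.Perm (K × K × K)) :=
  QgrpBig K ⊔ Egrp K ε

section Helpers
variable {K : Type*} [Field K]

lemma alphaPerm_apply (u v w : K) (x : K × K × K) :
    alphaPerm u v w x = (x.1 + u, x.2.1 + v, x.2.2 + w) := rfl

lemma alphaPerm_mul (u v w u' v' w' : K) :
    alphaPerm u v w * alphaPerm u' v' w' = alphaPerm (u' + u) (v' + v) (w' + w) := by
  apply Equiv.ext
  rintro ⟨a, b, c⟩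
  simp [alphaPerm, Equiv.Perm.mul_apply, add_assoc]

lemma alphaPerm_zero : alphaPerm (0:K) 0 0 = 1 := by
  apply Equiv.ext; rintro ⟨a, b, c⟩; simp [alphaPerm]

lemma alphaPerm_inv (u v w : K) : (alphaPerm u v w)⁻¹ = alphaPerm (-u) (-v) (-w) := by
  symm
  apply eq_inv_of_mul_eq_one_left
  rw [alphaPerm_mul]; simp [alphaPerm_zero]

/-- The set of all translations as a subgroup. -/
def AFull : Subgroup (Equiv.Perm (K × K × K)) where
  carrier := {g | ∃ u v w : K, g = alphaPerm u v w}
  one_mem' := ⟨0, 0, 0, alphaPerm_zero.symm⟩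
  mul_mem' := by rintro _ _ ⟨u, v, w, rfl⟩ ⟨u', v', w', rfl⟩; exact ⟨_, _, _, alphaPerm_mul ..⟩
  inv_mem' := by rintro _ ⟨u, v, w, rfl⟩; exact ⟨_, _, _, alphaPerm_inv u v w⟩

lemma Agrp_eq : Agrp K = AFull := Subgroup.closure_eq (AFull (K := K))

lemma mem_Agrp {g : Equiv.Perm (K × K × K)} :
    g ∈ Agrp K ↔ ∃ u v w : K, g = alphaPerm u v w := by
  rw [Agrp_eq]; rfl

/-- `V` as an explicit set. -/
def VFull : Subgroup (Equiv.Perm (K × K × K)) where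
  carrier := {g | ∃ u v : K, g = alphaPerm u v 0}
  one_mem' := ⟨0, 0, alphaPerm_zero.symm⟩
  mul_mem' := by
    rintro _ _ ⟨u, v, rfl⟩ ⟨u', v', rfl⟩
    exact ⟨u' + u, v' + v, by rw [alphaPerm_mul, add_zero]⟩
  inv_mem' := by rintro _ ⟨u, v, rfl⟩; exact ⟨-u, -v, by rw [alphaPerm_inv, neg_zero]⟩

lemma Vgrp_eq : Vgrp K = VFull := Subgroup.closure_eq (VFull (K := K))

lemma mem_Vgrp {g : Equiv.Perm (K × K × K)} :
    g ∈ Vgrp K ↔ ∃ u v : K, g = alphaPerm u v 0 := by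
  rw [Vgrp_eq]; rfl

/-- `F` as an explicit set. -/
def FFull : Subgroup (Equiv.Perm (K × K × K)) where
  carrier := {g | ∃ w : K, g = alphaPerm 0 0 w}
  one_mem' := ⟨0, alphaPerm_zero.symm⟩
  mul_mem' := by
    rintro _ _ ⟨w, rfl⟩ ⟨w', rfl⟩
    exact ⟨w' + w, by rw [alphaPerm_mul, add_zero]⟩
  inv_mem' := by rintro _ ⟨w, rfl⟩; exact ⟨-w, by rw [alphaPerm_inv, neg_zero]⟩

lemma Fgrp_eq : Fgrp K = FFull := Subgroup.closure_eq (FFull (K := K))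

lemma mem_Fgrp {g : Equiv.Perm (K × K × K)} :
    g ∈ Fgrp K ↔ ∃ w : K, g = alphaPerm 0 0 w := by
  rw [Fgrp_eq]; rfl

end Helpers
section LinHat
variable {K : Type*} [Field K]

/-- Linear permutations acting on the plane by an invertible matrix `[[p,q],[s,t]]`
and on the third coordinate by `det^(2ε)`. -/
def LinHat (ε : ℕ) : Subgroup (Equiv.Perm (K × K × K)) where
  carrier := {g | ∃ p q s t : K, p * t - q * s ≠ 0 ∧
      ∀ a b c : K, g (a, b, c) = (p*a + q*b, s*a + t*b, (p*t - q*s)^(2*ε) * c)}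
  one_mem' := ⟨1, 0, 0, 1, by norm_num⟩
  mul_mem' := by
    rintro g h ⟨p, q, s, t, hd, hg⟩ ⟨p', q', s', t', hd', hh⟩
    refine ⟨p*p' + q*s', p*q' + q*t', s*p' + t*s', s*q' + t*t', ?_, ?_⟩
    · have : (p*p' + q*s')*(s*q' + t*t') - (p*q' + q*t')*(s*p' + t*s')
          = (p*t - q*s) * (p'*t' - q'*s') := by ring
      rw [this]
      exact mul_ne_zero hd hd'
    · intro a b c
      have : (p*p' + q*s')*(s*q' + t*t') - (p*q' + q*t')*(s*p' + t*s')
          = (p*t - q*s) * (p'*t' - q'*s') := by ring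
      rw [Equiv.Perm.mul_apply, hh, hg, this, mul_pow]
      refine Prod.ext (by ring) (Prod.ext (by ring) (by ring))
  inv_mem' := by
    rintro g ⟨p, q, s, t, hd, hg⟩
    have hdet : t/(p*t-q*s) * (p/(p*t-q*s)) - -(q/(p*t-q*s)) * -(s/(p*t-q*s))
        = (p*t-q*s)⁻¹ := by
      field_simp
    set d := p * t - q * s with hdef
    refine ⟨t/d, -(q/d), -(s/d), p/d, ?_, ?_⟩
    · rw [hdet]
      exact inv_ne_zero hd
    · intro a b c
      rw [show (g⁻¹ : Equiv.Perm (K × K × K)) = g.symm from rfl, Equiv.symm_apply_eq, hg,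
        hdet]
      refine Prod.ext ?_ (Prod.ext ?_ ?_)
      · show a = p * (t/d*a + -(q/d)*b) + q * (-(s/d)*a + p/d*b)
        field_simp
        ring
      · show b = s * (t/d*a + -(q/d)*b) + t * (-(s/d)*a + p/d*b)
        field_simp
        ring
      · show c = d^(2*ε) * ((d⁻¹)^(2*ε) * c)
        rw [← mul_assoc, ← mul_pow, mul_inv_cancel₀ hd, one_pow, one_mul]

lemma linHat_apply_zero {ε : ℕ} {g : Equiv.Perm (K × K × K)} (hg : g ∈ LinHat ε) :
    g (0, 0, 0) = (0, 0, 0) := by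
  obtain ⟨p, q, s, t, hd, hf⟩ := hg
  rw [hf]
  simp

lemma gammaPerm_mem_linHat (ε : ℕ) (e : K) : gammaPerm e ∈ LinHat (K := K) ε :=
  ⟨1, e, 0, 1, by norm_num, fun a b c => by simp [gammaPerm]⟩

lemma deltaPerm_mem_linHat (ε : ℕ) : deltaPerm K ∈ LinHat (K := K) ε :=
  ⟨0, 1, -1, 0, by norm_num, fun a b c => by norm_num [deltaPerm]⟩

lemma betaPerm_mem_linHat (ε : ℕ) (l m : Kˣ) : betaPerm ε l m ∈ LinHat (K := K) ε := by
  refine ⟨l, 0, 0, m, by simp [l.ne_zero, m.ne_zero], fun a b c => ?_⟩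
  simp only [betaPerm, Equiv.coe_fn_mk]
  refine Prod.ext (by ring) (Prod.ext (by ring) ?_)
  show ((((l * m) ^ (2*ε) : Kˣ) : K)) * c = ((l:K) * m - 0 * 0)^(2*ε) * c
  push_cast
  ring

lemma MS_le_linHat (ε : ℕ) : Mgrp K ε ⊔ Sgrp K ε ≤ LinHat ε := by
  refine sup_le (sup_le (sup_le ?_ ?_) ?_) ?_
  · rw [Cgrp, Subgroup.closure_le]
    rintro _ ⟨e, rfl⟩; exact gammaPerm_mem_linHat ε e
  · rw [Dgrp, Subgroup.closure_le]
    rintro _ rfl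
    · exact deltaPerm_mem_linHat ε
  · rw [Tgrp, Subgroup.closure_le]
    rintro _ ⟨μ, rfl⟩; exact betaPerm_mem_linHat ε μ μ⁻¹
  · rw [Sgrp, Subgroup.closure_le]
    rintro _ ⟨μ, rfl⟩; exact betaPerm_mem_linHat ε (μ^2) μ

end LinHat
section SL2
variable {K : Type*} [Field K]

lemma gammaPerm_mem_M (ε : ℕ) (e : K) : gammaPerm e ∈ Mgrp K ε :=
  Subgroup.mem_sup_left (Subgroup.mem_sup_left (Subgroup.subset_closure ⟨e, rfl⟩))

lemma deltaPerm_mem_M (ε : ℕ) : deltaPerm K ∈ Mgrp K ε :=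
  Subgroup.mem_sup_left (Subgroup.mem_sup_right (Subgroup.subset_closure rfl))

lemma betaT_mem_M (ε : ℕ) (μ : Kˣ) : betaPerm ε μ μ⁻¹ ∈ Mgrp K ε :=
  Subgroup.mem_sup_right (Subgroup.subset_closure ⟨μ, rfl⟩)

/-- Every `g` acting as an SL₂ matrix on the plane and trivially on the third
coordinate lies in `M`. -/
lemma sl_mem_M (ε : ℕ) {g : Equiv.Perm (K × K × K)} (p q s t : K)
    (h : p * t - q * s = 1)
    (hg : ∀ a b c : K, g (a, b, c) = (p*a + q*b, s*a + t*b, c)) :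
    g ∈ Mgrp K ε := by
  by_cases hs : s = 0
  · subst hs
    have hp : p ≠ 0 := by
      intro h0; rw [h0] at h; simp at h
    have : g = betaPerm ε (Units.mk0 p hp) (Units.mk0 p hp)⁻¹ * gammaPerm (q/p) := by
      apply Equiv.ext
      rintro ⟨a, b, c⟩
      rw [Equiv.Perm.mul_apply, hg]
      simp only [gammaPerm, betaPerm, Equiv.coe_fn_mk, mul_inv_cancel, one_pow,
        Units.val_one, Units.val_inv_eq_inv_val, Units.val_mk0, one_mul, Prod.mk.injEq]
      refine ⟨?_, ?_, trivial⟩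
      · field_simp
      · field_simp
        linear_combination b * h
    rw [this]
    exact mul_mem (betaT_mem_M ε _) (gammaPerm_mem_M ε _)
  · have hns : (-s : K) ≠ 0 := neg_ne_zero.mpr hs
    have : g = gammaPerm (p/s) * (deltaPerm K *
        (betaPerm ε (Units.mk0 (-s) hns) (Units.mk0 (-s) hns)⁻¹ * gammaPerm (t/s))) := by
      apply Equiv.ext
      rintro ⟨a, b, c⟩
      simp only [Equiv.Perm.mul_apply, hg]
      simp only [gammaPerm, betaPerm, deltaPerm, Equiv.coe_fn_mk, mul_inv_cancel, one_pow,
        Units.val_one, Units.val_inv_eq_inv_val, Units.val_mk0, one_mul, Prod.mk.injEq]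
      refine ⟨?_, ?_, trivial⟩
      · field_simp
        linear_combination (-b) * h
      · field_simp
    rw [this]
    exact mul_mem (gammaPerm_mem_M ε _) (mul_mem (deltaPerm_mem_M ε)
      (mul_mem (betaT_mem_M ε _) (gammaPerm_mem_M ε _)))

end SL2
section Main
variable {K : Type*} [Field K]

lemma linHat_conj_alpha {ε : ℕ} {g : Equiv.Perm (K × K × K)} (hg : g ∈ LinHat ε)
    (u v w : K) : ∃ u' v' w' : K, g * alphaPerm u v w * g⁻¹ = alphaPerm u' v' w' := by
  obtain ⟨p, q, s, t, hd, hf⟩ := hg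
  refine ⟨p*u + q*v, s*u + t*v, (p*t - q*s)^(2*ε) * w, ?_⟩
  rw [mul_inv_eq_iff_eq_mul]
  apply Equiv.ext
  rintro ⟨a, b, c⟩
  rw [Equiv.Perm.mul_apply, Equiv.Perm.mul_apply, alphaPerm_apply, alphaPerm_apply, hf, hf]
  refine Prod.ext (by ring) (Prod.ext (by ring) (by ring))

lemma linHat_le_normalizer (ε : ℕ) :
    LinHat (K := K) ε ≤ Subgroup.normalizer (Agrp K : Set (Equiv.Perm (K × K × K))) := by
  intro g hg
  rw [Subgroup.mem_normalizer_iff]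
  intro h
  constructor
  · intro hh
    obtain ⟨u, v, w, rfl⟩ := mem_Agrp.mp hh
    obtain ⟨u', v', w', heq⟩ := linHat_conj_alpha hg u v w
    rw [heq, mem_Agrp]
    exact ⟨u', v', w', rfl⟩
  · intro hh
    obtain ⟨u, v, w, heq⟩ := mem_Agrp.mp hh
    obtain ⟨u', v', w', heq'⟩ := linHat_conj_alpha ((LinHat ε).inv_mem hg) u v w
    have : h = g⁻¹ * (g * h * g⁻¹) * g := by group
    rw [this, heq, mem_Agrp]
    refine ⟨u', v', w', ?_⟩
    calc g⁻¹ * alphaPerm u v w * g = g⁻¹ * alphaPerm u v w * g⁻¹⁻¹ := by group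
    _ = alphaPerm u' v' w' := heq'

lemma big_le_normalizer (ε : ℕ) :
    Agrp K ⊔ Mgrp K ε ⊔ Sgrp K ε ≤ Subgroup.normalizer (Agrp K : Set (Equiv.Perm (K × K × K))) := by
  refine sup_le (sup_le Subgroup.le_normalizer ?_) ?_
  · exact le_trans (le_trans le_sup_left (MS_le_linHat ε)) (linHat_le_normalizer ε)
  · exact le_trans (le_trans le_sup_right (MS_le_linHat ε)) (linHat_le_normalizer ε)

lemma M_le_centralizer_F (ε : ℕ) :
    Mgrp K ε ≤ Subgroup.centralizer (Fgrp K : Set (Equiv.Perm (K × K × K))) := by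
  have key : ∀ g : Equiv.Perm (K × K × K),
      (∀ w : K, alphaPerm 0 0 w * g = g * alphaPerm 0 0 w) →
      g ∈ Subgroup.centralizer (Fgrp K : Set (Equiv.Perm (K × K × K))) := by
    intro g hcomm
    rw [Subgroup.mem_centralizer_iff]
    intro h hh
    obtain ⟨w, rfl⟩ := mem_Fgrp.mp hh
    exact hcomm w
  refine sup_le (sup_le ?_ ?_) ?_
  · rw [Cgrp, Subgroup.closure_le]
    rintro _ ⟨e, rfl⟩
    apply key
    intro w
    apply Equiv.ext
    rintro ⟨a, b, c⟩
    simp [gammaPerm, alphaPerm, Equiv.Perm.mul_apply]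
  · rw [Dgrp, Subgroup.closure_le]
    rintro _ rfl
    · apply key
      intro w
      apply Equiv.ext
      rintro ⟨a, b, c⟩
      simp [deltaPerm, alphaPerm, Equiv.Perm.mul_apply]
  · rw [Tgrp, Subgroup.closure_le]
    rintro _ ⟨μ, rfl⟩
    apply key
    intro w
    apply Equiv.ext
    rintro ⟨a, b, c⟩
    simp [betaPerm, alphaPerm, Equiv.Perm.mul_apply, mul_add]

lemma beta1neg1_mem_centralizer_F (ε : ℕ) :
    betaPerm ε (1 : Kˣ) (-1) ∈
      Subgroup.centralizer (Fgrp K : Set (Equiv.Perm (K × K × K))) := by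
  rw [Subgroup.mem_centralizer_iff]
  intro h hh
  obtain ⟨w, rfl⟩ := mem_Fgrp.mp hh
  have hsc : ((((1 : Kˣ) * (-1)) ^ (2 * ε) : Kˣ) : K) = 1 := by
    rw [one_mul, pow_mul]
    norm_num
  apply Equiv.ext
  rintro ⟨a, b, c⟩
  simp only [betaPerm, alphaPerm, Equiv.Perm.mul_apply, Equiv.coe_fn_mk, hsc]
  refine Prod.ext (by ring) (Prod.ext (by ring) (by ring))

lemma beta1neg1_mem_S (ε : ℕ) : betaPerm ε (1 : Kˣ) (-1) ∈ Sgrp K ε := by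
  have : betaPerm ε (1 : Kˣ) (-1) = betaPerm (K := K) ε ((-1 : Kˣ) ^ 2) (-1) := by
    norm_num
  rw [this]
  exact Subgroup.subset_closure ⟨-1, rfl⟩

end Main
section Decomp
variable {K : Type*} [Field K]

lemma MS_conj_mem (ε : ℕ) {m a : Equiv.Perm (K × K × K)}
    (hm : m ∈ Mgrp K ε ⊔ Sgrp K ε) (ha : a ∈ Agrp K) : m * a * m⁻¹ ∈ Agrp K := by
  have h := linHat_le_normalizer ε (MS_le_linHat ε hm)
  rw [Subgroup.mem_normalizer_iff] at h
  exact (h a).mp ha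

lemma MS_conj_mem' (ε : ℕ) {m a : Equiv.Perm (K × K × K)}
    (hm : m ∈ Mgrp K ε ⊔ Sgrp K ε) (ha : a ∈ Agrp K) : m⁻¹ * a * m ∈ Agrp K := by
  have := MS_conj_mem ε (inv_mem hm) ha
  rwa [inv_inv] at this

/-- The set of products `m * a`. -/
def Wgrp (ε : ℕ) : Subgroup (Equiv.Perm (K × K × K)) where
  carrier := {g | ∃ a ∈ Agrp K, ∃ m ∈ Mgrp K ε ⊔ Sgrp K ε, g = m * a}
  one_mem' := ⟨1, one_mem _, 1, one_mem _, by simp⟩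
  mul_mem' := by
    rintro x y ⟨a, ha, m, hm, rfl⟩ ⟨a', ha', m', hm', rfl⟩
    exact ⟨(m'⁻¹ * a * m') * a', mul_mem (MS_conj_mem' ε hm' ha) ha',
      m * m', mul_mem hm hm', by group⟩
  inv_mem' := by
    rintro x ⟨a, ha, m, hm, rfl⟩
    exact ⟨m * a⁻¹ * m⁻¹, MS_conj_mem ε hm (inv_mem ha), m⁻¹, inv_mem hm, by group⟩

lemma big_le_W (ε : ℕ) : Agrp K ⊔ Mgrp K ε ⊔ Sgrp K ε ≤ Wgrp ε := by
  refine sup_le (sup_le ?_ ?_) ?_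
  · intro a ha
    exact ⟨a, ha, 1, one_mem _, (one_mul a).symm⟩
  · intro m hm
    exact ⟨1, one_mem _, m, Subgroup.mem_sup_left hm, (mul_one m).symm⟩
  · intro m hm
    exact ⟨1, one_mem _, m, Subgroup.mem_sup_right hm, (mul_one m).symm⟩

end Decomp
/-- Lemma 2.4 (part): `⟨A, M, S⟩ = A ⋊ ⟨M,S⟩` with `A = F × V` internally,
`C_{⟨M,S⟩}(V) = 1`, `[M,F] = 1` and `C_{⟨M,S⟩}(F) = ⟨M, β_{1,-1}⟩`.
(The paper's product `a·m`, composed left to right, is `m * a` in Lean.) -/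
theorem stmt4 (r : ℕ) (hr : 1 ≤ r) (K : Type*) [Field K] [Fintype K]
    (hcard : Fintype.card K = 3 ^ r) (ε : ℕ) (hε : ε = 3 ^ (r - 1)) :
    ((Agrp K).subgroupOf (Agrp K ⊔ Mgrp K ε ⊔ Sgrp K ε)).Normal
    ∧ Agrp K ⊓ (Mgrp K ε ⊔ Sgrp K ε) = ⊥
    ∧ (∀ g ∈ Agrp K ⊔ Mgrp K ε ⊔ Sgrp K ε,
        ∃ a ∈ Agrp K, ∃ m ∈ Mgrp K ε ⊔ Sgrp K ε, g = m * a)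
    ∧ (Agrp K = Fgrp K ⊔ Vgrp K ∧ Fgrp K ⊓ Vgrp K = ⊥ ∧ ⁅Fgrp K, Vgrp K⁆ = ⊥)
    ∧ (Mgrp K ε ⊔ Sgrp K ε) ⊓ Subgroup.centralizer (Vgrp K : Set (Equiv.Perm (K × K × K))) = ⊥
    ∧ ⁅Mgrp K ε, Fgrp K⁆ = ⊥
    ∧ (Mgrp K ε ⊔ Sgrp K ε) ⊓ Subgroup.centralizer (Fgrp K : Set (Equiv.Perm (K × K × K)))
      = Mgrp K ε ⊔ Subgroup.closure {betaPerm ε (1 : Kˣ) (-1)} := by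
  refine ⟨?_, ?_, ?_, ⟨?_, ?_, ?_⟩, ?_, ?_, ?_⟩
  · -- normality
    constructor
    intro n hn g
    rw [Subgroup.mem_subgroupOf] at hn ⊢
    have hg := big_le_normalizer ε g.2
    rw [Subgroup.mem_normalizer_iff] at hg
    simpa using (hg (n : Equiv.Perm (K × K × K))).mp hn
  · -- A ⊓ MS = ⊥
    rw [eq_bot_iff]
    intro g hg
    rw [Subgroup.mem_inf] at hg
    obtain ⟨u, v, w, rfl⟩ := mem_Agrp.mp hg.1
    have h0 := linHat_apply_zero (MS_le_linHat ε hg.2)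
    rw [alphaPerm_apply] at h0
    simp only [zero_add, Prod.mk.injEq] at h0
    obtain ⟨rfl, rfl, rfl⟩ := h0
    rw [Subgroup.mem_bot]
    exact alphaPerm_zero
  · -- decomposition
    intro g hg
    exact big_le_W ε hg
  · -- A = F ⊔ V
    apply le_antisymm
    · rw [Agrp, Subgroup.closure_le]
      rintro _ ⟨u, v, w, rfl⟩
      have : alphaPerm u v w = alphaPerm 0 0 w * alphaPerm u v 0 := by
        rw [alphaPerm_mul]; simp
      rw [this]
      exact mul_mem (Subgroup.mem_sup_left (Subgroup.subset_closure ⟨w, rfl⟩))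
        (Subgroup.mem_sup_right (Subgroup.subset_closure ⟨u, v, rfl⟩))
    · refine sup_le ?_ ?_
      · rw [Fgrp, Subgroup.closure_le]
        rintro _ ⟨w, rfl⟩
        exact Subgroup.subset_closure ⟨0, 0, w, rfl⟩
      · rw [Vgrp, Subgroup.closure_le]
        rintro _ ⟨u, v, rfl⟩
        exact Subgroup.subset_closure ⟨u, v, 0, rfl⟩
  · -- F ⊓ V = ⊥
    rw [eq_bot_iff]
    intro g hg
    rw [Subgroup.mem_inf] at hg
    obtain ⟨w, rfl⟩ := mem_Fgrp.mp hg.1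
    obtain ⟨u, v, he⟩ := mem_Vgrp.mp hg.2
    have h3 := congrArg (fun f : Equiv.Perm (K × K × K) => (f (0, 0, 0)).2.2) he
    simp only [alphaPerm_apply, zero_add, add_zero] at h3
    rw [Subgroup.mem_bot, h3]
    exact alphaPerm_zero
  · -- [F, V] = ⊥
    rw [Subgroup.commutator_eq_bot_iff_le_centralizer]
    intro g hg
    obtain ⟨w, rfl⟩ := mem_Fgrp.mp hg
    rw [Subgroup.mem_centralizer_iff]
    intro h hh
    obtain ⟨u, v, rfl⟩ := mem_Vgrp.mp hh
    rw [alphaPerm_mul, alphaPerm_mul]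
    simp
  · -- MS ⊓ centralizer V = ⊥
    rw [eq_bot_iff]
    intro g hg
    rw [Subgroup.mem_inf] at hg
    obtain ⟨p, q, s, t, hd, hf⟩ := MS_le_linHat ε hg.1
    have hc := Subgroup.mem_centralizer_iff.mp hg.2
    have key : ∀ u v : K, u = p * u + q * v ∧ v = s * u + t * v := by
      intro u v
      have hco := hc (alphaPerm u v 0) (Subgroup.subset_closure ⟨u, v, rfl⟩)
      have h3 := congrArg (fun f : Equiv.Perm (K × K × K) => f (0, 0, 0)) hco
      simp only [Equiv.Perm.mul_apply, alphaPerm_apply, hf, Prod.mk.injEq] at h3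
      simp only [mul_zero, zero_add, add_zero, zero_mul, mul_zero] at h3
      exact ⟨h3.1, h3.2.1⟩
    have hp : p = 1 := by have := (key 1 0).1; simpa using this.symm
    have hs : s = 0 := by have := (key 1 0).2; simpa using this.symm
    have hq : q = 0 := by have := (key 0 1).1; simpa using this.symm
    have ht : t = 1 := by have := (key 0 1).2; simpa using this.symm
    rw [Subgroup.mem_bot]
    apply Equiv.ext
    rintro ⟨a, b, c⟩
    rw [hf]
    simp [hp, hs, hq, ht]
  · -- [M, F] = ⊥
    rw [Subgroup.commutator_eq_bot_iff_le_centralizer]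
    exact M_le_centralizer_F ε
  · -- MS ⊓ centralizer F = M ⊔ ⟨β_{1,-1}⟩
    apply le_antisymm
    · intro g hg
      rw [Subgroup.mem_inf] at hg
      obtain ⟨p, q, s, t, hd, hf⟩ := MS_le_linHat ε hg.1
      have hc := Subgroup.mem_centralizer_iff.mp hg.2
      have hpow : (p * t - q * s) ^ (2 * ε) = 1 := by
        have hco := hc (alphaPerm 0 0 1) (Subgroup.subset_closure ⟨1, rfl⟩)
        have h3 := congrArg (fun f : Equiv.Perm (K × K × K) => (f (0, 0, 0)).2.2) hco
        simp only [Equiv.Perm.mul_apply, alphaPerm_apply, hf, Prod.mk.injEq] at h3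
        simpa using h3.symm
      have hd2 : (p * t - q * s) ^ 2 = 1 := by
        rw [← orderOf_dvd_iff_pow_eq_one] at hpow ⊢
        have h5 : orderOf (p * t - q * s) ∣ 3 ^ r - 1 := by
          rw [← hcard]
          exact orderOf_dvd_of_pow_eq_one (FiniteField.pow_card_sub_one_eq_one _ hd)
        have h6 := Nat.dvd_gcd hpow h5
        have hco3 : Nat.Coprime 3 (3 ^ r - 1) := by
          rw [Nat.Prime.coprime_iff_not_dvd Nat.prime_three]
          intro hdvd3
          have h7 : (3 : ℕ) ∣ 3 ^ r := dvd_pow_self 3 (by omega)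
          have h8 : 1 ≤ 3 ^ r := Nat.one_le_pow _ _ (by norm_num)
          omega
        have hco : Nat.Coprime ε (3 ^ r - 1) := by
          rw [hε]; exact hco3.pow_left _
        rw [hco.gcd_mul_right_cancel 2] at h6
        exact h6.trans (Nat.gcd_dvd_left 2 _)
      have hfact : (p * t - q * s - 1) * (p * t - q * s + 1) = 0 := by
        linear_combination hd2
      rcases mul_eq_zero.mp hfact with h | h
      · have hd1 : p * t - q * s = 1 := by linear_combination h
        refine Subgroup.mem_sup_left (sl_mem_M ε p q s t hd1 fun a b c => ?_)
        rw [hf, hd1, one_pow, one_mul]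
      · have hdneg : p * t - q * s = -1 := by linear_combination h
        have hb0 : ∀ a b c : K, betaPerm ε (1 : Kˣ) (-1) (a, b, c) = (a, -b, c) := by
          intro a b c
          have hsc : ((((1 : Kˣ) * (-1)) ^ (2 * ε) : Kˣ) : K) = 1 := by
            rw [one_mul, pow_mul]; norm_num
          simp only [betaPerm, Equiv.coe_fn_mk, hsc]
          norm_num
        have hM : g * betaPerm ε (1 : Kˣ) (-1) ∈ Mgrp K ε := by
          refine sl_mem_M ε p (-q) s (-t) (by linear_combination -hdneg) fun a b c => ?_
          rw [Equiv.Perm.mul_apply, hb0, hf, hpow, one_mul]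
          refine Prod.ext (by ring) (Prod.ext (by ring) rfl)
        have hgeq : g = (g * betaPerm ε (1 : Kˣ) (-1)) * (betaPerm ε (1 : Kˣ) (-1))⁻¹ := by
          rw [mul_inv_cancel_right]
        rw [hgeq]
        exact mul_mem (Subgroup.mem_sup_left hM)
          (inv_mem (Subgroup.mem_sup_right (Subgroup.subset_closure rfl)))
    · refine sup_le (le_inf le_sup_left (M_le_centralizer_F ε)) ?_
      rw [Subgroup.closure_le]
      rintro _ rfl
      · exact ⟨Subgroup.mem_sup_right (beta1neg1_mem_S ε), beta1neg1_mem_centralizer_F ε⟩
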